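/- arXiv:2209.12682 — 2 statements merged into one kernel-verified Lean document; each statement's English description precedes it below -/
import Mathlib

section
/- Let a < b be real numbers and let I be a set of closed subintervals of [a,b] (identified as a predicate on pairs r ≤ t in [a,b]). Suppose: (A) additivity: if [r,s] ∈ I and [s,t] ∈ I then [r,t] ∈ I; (L) for every s ∈ (a,b] there exists δ with 0 < δ ≤ s − a such that [r,s] ∈ I for every r ∈ [s−δ, s); and (r) for every s ∈ [a,b) there exists t ∈ (s,b] with [s,t] ∈ I. Then [a,b] ∈ I. -/
/-- Key-lemma with the weak right condition (r): an additive family of closed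
subintervals of `[a,b]` satisfying the left local condition (L) and the weak
right condition (r) contains `[a,b]` itself.  Membership of `[r,t]`
(with `a ≤ r < t ≤ b`) in the family is encoded by the binary predicate `P r t`. -/
theorem key_lemma_Lr (a b : ℝ) (hab : a < b) (P : ℝ → ℝ → Prop)
    (hA : ∀ r s t : ℝ, a ≤ r → r < s → s < t → t ≤ b → P r s → P s t → P r t)
    (hL : ∀ s : ℝ, a < s → s ≤ b →
      ∃ δ : ℝ, 0 < δ ∧ δ ≤ s - a ∧ ∀ r : ℝ, s - δ ≤ r → r < s → P r s)
    (hr : ∀ s : ℝ, a ≤ s → s < b → ∃ t : ℝ, s < t ∧ t ≤ b ∧ P s t) :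
    P a b := by
  set T : Set ℝ := {t | a < t ∧ t ≤ b ∧ P a t} with hT
  obtain ⟨t0, ht0a, ht0b, hPt0⟩ := hr a le_rfl hab
  have hTne : T.Nonempty := ⟨t0, ht0a, ht0b, hPt0⟩
  have hTbdd : BddAbove T := ⟨b, fun x hx => hx.2.1⟩
  set c := sSup T with hc
  have hct0 : t0 ≤ c := le_csSup hTbdd ⟨ht0a, ht0b, hPt0⟩
  have hac : a < c := lt_of_lt_of_le ht0a hct0
  have hcb : c ≤ b := csSup_le hTne fun x hx => hx.2.1
  obtain ⟨δ, hδ0, hδa, hδP⟩ := hL c hac hcb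
  -- there is t ∈ T with c - δ < t
  obtain ⟨t, htT, htgt⟩ := exists_lt_of_lt_csSup hTne (by linarith : c - δ < c)
  have htc : t ≤ c := le_csSup hTbdd htT
  have hPac : P a c := by
    rcases eq_or_lt_of_le htc with h | h
    · exact h ▸ htT.2.2
    · exact hA a t c le_rfl htT.1 h hcb htT.2.2 (hδP t (le_of_lt htgt) h)
  rcases eq_or_lt_of_le hcb with h | h
  · exact h ▸ hPac
  · obtain ⟨t', ht'c, ht'b, hPt'⟩ := hr c (le_of_lt hac) h
    have : t' ∈ T := ⟨lt_trans hac ht'c, ht'b, hA a c t' le_rfl hac ht'c ht'b hPac hPt'⟩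
    have := le_csSup hTbdd this
    linarith
end

section
/- Let a < b be real numbers and let I be a set of closed subintervals of [a,b] (identified as a predicate on pairs r ≤ t in [a,b]) satisfying: (A) additivity: if [r,s] ∈ I and [s,t] ∈ I then [r,t] ∈ I; and (L) for every s ∈ (a,b] there exists δ with 0 < δ ≤ s − a such that [r,s] ∈ I for every r ∈ [s−δ, s). Define E = {a} ∪ {x ∈ (a,b] : [a,x] ∈ I}. Then the supremum s of E satisfies s ∈ E; that is, either s = a or [a,s] ∈ I. -/
/-- Under additivity (A) and the left local condition (L), the supremum `s` of
`E = {a} ∪ {x ∈ (a,b] : [a,x] ∈ I}` belongs to `E`: either `s = a` or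
`[a,s] ∈ I`.  Membership of `[r,t]` in `I` is encoded by `P r t`. -/
theorem sup_mem_E (a b : ℝ) (hab : a < b) (P : ℝ → ℝ → Prop)
    (hA : ∀ r s t : ℝ, a ≤ r → r < s → s < t → t ≤ b → P r s → P s t → P r t)
    (hL : ∀ s : ℝ, a < s → s ≤ b →
      ∃ δ : ℝ, 0 < δ ∧ δ ≤ s - a ∧ ∀ r : ℝ, s - δ ≤ r → r < s → P r s) :
    sSup ({a} ∪ {x | x ∈ Set.Ioc a b ∧ P a x}) = a ∨
      P a (sSup ({a} ∪ {x | x ∈ Set.Ioc a b ∧ P a x})) := by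
  set E : Set ℝ := {a} ∪ {x | x ∈ Set.Ioc a b ∧ P a x} with hE
  have hne : E.Nonempty := ⟨a, Or.inl rfl⟩
  have hbdd : BddAbove E := by
    refine ⟨b, fun x hx => ?_⟩
    rcases hx with rfl | ⟨hx, _⟩
    · exact hab.le
    · exact hx.2
  set s := sSup E with hs
  have hsa : a ≤ s := le_csSup hbdd (Or.inl rfl)
  have hsb : s ≤ b := csSup_le hne (fun x hx => by
    rcases hx with rfl | ⟨hx, _⟩
    · exact hab.le
    · exact hx.2)
  rcases eq_or_lt_of_le hsa with h | h
  · exact Or.inl h.symm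
  · right
    obtain ⟨δ, hδ0, hδa, hδ⟩ := hL s h hsb
    obtain ⟨x, hxE, hx⟩ := exists_lt_of_lt_csSup hne (by linarith : s - δ < s)
    have hxs : x ≤ s := le_csSup hbdd hxE
    have hxa : a < x := by
      rcases hxE with rfl | ⟨hx', _⟩
      · linarith
      · exact hx'.1
    have hPax : P a x := by
      rcases hxE with rfl | ⟨_, hP⟩
      · linarith
      · exact hP
    rcases eq_or_lt_of_le hxs with rfl | hlt
    · exact hPax
    · exact hA a x s le_rfl hxa hlt hsb hPax (hδ x (by linarith) hlt)
end
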